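/- Let ℓ ≥ 1 be an integer, let p, p', q ∈ (0,1) with q = p or q = p'. Let Z, Z', S be independent random variables where Z is Bernoulli with parameter p, Z' is Bernoulli with parameter p', and S is binomial with parameters ℓ and q. Then KL(Z+S, Z'+S) = ∑_{k=0}^{ℓ+1} P(Z+S = k) · log( ((p − q)·k + (1 − p)·q·(ℓ+1)) / ((p' − q)·k + (1 − p')·q·(ℓ+1)) ). -/

import Mathlib

/-- Probability mass function on ℕ of a Bernoulli distribution with parameter `p`. -/
noncomputable def bernoulliPMF (p : ℝ) : ℕ → ℝ :=
  fun k => if k = 0 then 1 - p else if k = 1 then p else 0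

/-- Probability mass function on ℕ of a binomial distribution with parameters `m` and `q`. -/
noncomputable def binomialPMF (m : ℕ) (q : ℝ) : ℕ → ℝ :=
  fun k => (m.choose k : ℝ) * q ^ k * (1 - q) ^ (m - k)

/-- Convolution of two mass functions on ℕ: the law of an independent sum. -/
noncomputable def convPMF (P Q : ℕ → ℝ) : ℕ → ℝ :=
  fun k => ∑ j ∈ Finset.range (k + 1), P j * Q (k - j)

/-- Kullback-Leibler divergence between two mass functions on ℕ
(with the convention `0 * log 0 = 0`, which holds automatically here). -/
noncomputable def klDivN (P Q : ℕ → ℝ) : ℝ :=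
  ∑' k, P k * Real.log (P k / Q k)

/-!
Write `b_m` for the binomial mass function with parameter `q`. Multiplied by
`(ℓ + 1) q (1 - q)`, the law of `Z + S` becomes `b_{ℓ+1}(k) ((p - q) k + (1 - p) q (ℓ + 1))`,
by the two Pascal-type relations between `b_ℓ` and `b_{ℓ+1}`. The factor `b_{ℓ+1}(k)` does not
depend on `p`, vanishes for `k > ℓ + 1` and is positive otherwise, so it cancels in every
likelihood ratio and the divergence reduces to a finite sum.
-/

lemma binomialPMF_eq_zero_of_lt {m k : ℕ} (h : m < k) (q : ℝ) : binomialPMF m q k = 0 := by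
  simp [binomialPMF, Nat.choose_eq_zero_of_lt h]

lemma binomialPMF_pos {m k : ℕ} {q : ℝ} (h : k ≤ m) (hq : q ∈ Set.Ioo (0 : ℝ) 1) :
    0 < binomialPMF m q k := by
  have hchoose : (0 : ℝ) < m.choose k := by exact_mod_cast Nat.choose_pos h
  have hq' : 0 < 1 - q := sub_pos.mpr hq.2
  have := hq.1
  unfold binomialPMF
  positivity

lemma add_one_mul_mul_binomialPMF (m k : ℕ) (q : ℝ) :
    ((m : ℝ) + 1) * q * binomialPMF m q k = ((k : ℝ) + 1) * binomialPMF (m + 1) q (k + 1) := by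
  have hchoose : ((m : ℝ) + 1) * m.choose k = (m + 1).choose (k + 1) * ((k : ℝ) + 1) := by
    exact_mod_cast Nat.add_one_mul_choose_eq m k
  simp only [binomialPMF, Nat.add_sub_add_right]
  linear_combination q ^ (k + 1) * (1 - q) ^ (m - k) * hchoose

lemma add_one_mul_one_sub_mul_binomialPMF (m k : ℕ) (q : ℝ) :
    ((m : ℝ) + 1) * (1 - q) * binomialPMF m q k =
      ((m : ℝ) + 1 - k) * binomialPMF (m + 1) q k := by
  rcases le_or_gt k m with hkm | hmk
  · have hchoose :
        (m.choose k : ℝ) * ((m : ℝ) + 1) = (m + 1).choose k * ((m : ℝ) + 1 - k) := by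
      have := congrArg (Nat.cast (R := ℝ)) (Nat.choose_mul_succ_eq m k)
      push_cast [Nat.cast_sub (by omega : k ≤ m + 1)] at this
      exact this
    have hexp : m + 1 - k = m - k + 1 := by omega
    simp only [binomialPMF, hexp, pow_succ]
    linear_combination q ^ k * (1 - q) ^ (m - k) * (1 - q) * hchoose
  · rw [binomialPMF_eq_zero_of_lt hmk, mul_zero]
    rcases (Nat.succ_le_of_lt hmk).eq_or_lt with rfl | hmk'
    · push_cast; ring
    · rw [binomialPMF_eq_zero_of_lt hmk', mul_zero]

lemma convPMF_bernoulliPMF_zero (p : ℝ) (Q : ℕ → ℝ) :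
    convPMF (bernoulliPMF p) Q 0 = (1 - p) * Q 0 := by
  simp [convPMF, bernoulliPMF]

lemma convPMF_bernoulliPMF_succ (p : ℝ) (Q : ℕ → ℝ) (k : ℕ) :
    convPMF (bernoulliPMF p) Q (k + 1) = (1 - p) * Q (k + 1) + p * Q k := by
  rw [convPMF, Finset.sum_range_succ', Finset.sum_range_succ',
    Finset.sum_eq_zero (by simp [bernoulliPMF])]
  norm_num [bernoulliPMF, add_comm]

lemma convPMF_bernoulliPMF_binomialPMF (ℓ : ℕ) (p q : ℝ) (k : ℕ) :
    ((ℓ : ℝ) + 1) * q * (1 - q) * convPMF (bernoulliPMF p) (binomialPMF ℓ q) k =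
      binomialPMF (ℓ + 1) q k * ((p - q) * k + (1 - p) * q * ((ℓ : ℝ) + 1)) := by
  cases k with
  | zero =>
    rw [convPMF_bernoulliPMF_zero]
    linear_combination (1 - p) * q * add_one_mul_one_sub_mul_binomialPMF ℓ 0 q
  | succ k =>
    have h₁ := add_one_mul_one_sub_mul_binomialPMF ℓ (k + 1) q
    have h₂ := add_one_mul_mul_binomialPMF ℓ k q
    rw [convPMF_bernoulliPMF_succ]
    push_cast at h₁ ⊢
    linear_combination (1 - p) * q * h₁ + p * (1 - q) * h₂

theorem stmt_9_general (ℓ : ℕ)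
    (p p' q : ℝ)
    (hq : q ∈ Set.Ioo (0 : ℝ) 1) :
    klDivN (convPMF (bernoulliPMF p) (binomialPMF ℓ q))
        (convPMF (bernoulliPMF p') (binomialPMF ℓ q)) =
      ∑ k ∈ Finset.range (ℓ + 2),
        convPMF (bernoulliPMF p) (binomialPMF ℓ q) k *
          Real.log (((p - q) * (k : ℝ) + (1 - p) * q * ((ℓ : ℝ) + 1)) /
            ((p' - q) * (k : ℝ) + (1 - p') * q * ((ℓ : ℝ) + 1))) := by
  have hc : ((ℓ : ℝ) + 1) * q * (1 - q) ≠ 0 := by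
    have := hq.1; have := sub_pos.mpr hq.2; positivity
  have hconv (r : ℝ) (k : ℕ) : convPMF (bernoulliPMF r) (binomialPMF ℓ q) k =
      binomialPMF (ℓ + 1) q k * ((r - q) * k + (1 - r) * q * ((ℓ : ℝ) + 1)) /
        (((ℓ : ℝ) + 1) * q * (1 - q)) := by
    rw [eq_div_iff hc, mul_comm, convPMF_bernoulliPMF_binomialPMF]
  rw [klDivN, tsum_eq_sum (s := Finset.range (ℓ + 2))]
  · refine Finset.sum_congr rfl fun k hk => ?_
    have hb := binomialPMF_pos (Nat.lt_succ_iff.mp (Finset.mem_range.mp hk)) hq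
    rw [hconv p k, hconv p' k, div_div_div_cancel_right₀ hc, mul_div_mul_left _ _ hb.ne',
      ← hconv]
  · intro k hk
    rw [hconv p k, binomialPMF_eq_zero_of_lt (by simp at hk; omega), zero_mul, zero_div, zero_mul]

theorem stmt_9 (ℓ : ℕ) (hℓ : 1 ≤ ℓ)
    (p p' q : ℝ) (hp : p ∈ Set.Ioo (0 : ℝ) 1) (hp' : p' ∈ Set.Ioo (0 : ℝ) 1)
    (hq : q ∈ Set.Ioo (0 : ℝ) 1) (hqpp' : q = p ∨ q = p') :
    klDivN (convPMF (bernoulliPMF p) (binomialPMF ℓ q))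
        (convPMF (bernoulliPMF p') (binomialPMF ℓ q)) =
      ∑ k ∈ Finset.range (ℓ + 2),
        convPMF (bernoulliPMF p) (binomialPMF ℓ q) k *
          Real.log (((p - q) * (k : ℝ) + (1 - p) * q * ((ℓ : ℝ) + 1)) /
            ((p' - q) * (k : ℝ) + (1 - p') * q * ((ℓ : ℝ) + 1))) :=
  stmt_9_general ℓ p p' q hq
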